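/- arXiv:1601.05345 — 12 statements merged into one kernel-verified Lean document; each statement's English description precedes it below -/
import Mathlib

section
/- If (f, f', f'', f''') and (g, g', g'', g''') belong to Δ(A), then ([f,g], [f',g'], [f'',g''], [f''',g''']) belongs to Δ(A), where [f,g] = f∘g − g∘f. Consequently, the set GDer(A) of generalized derivations of a 3-Lie algebra A is a Lie subalgebra of gl(A). -/
/-- A 3-Lie algebra: a module with a trilinear skew-symmetric bracket
satisfying the fundamental identity. -/
structure ThreeLieAlgebra (F A : Type*) [Field F] [AddCommGroup A] [Module F A] where
  br : A →ₗ[F] A →ₗ[F] A →ₗ[F] A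
  skew₁₂ : ∀ x y z, br x y z = - br y x z
  skew₂₃ : ∀ x y z, br x y z = - br x z y
  fund : ∀ x₁ x₂ x₃ y₂ y₃,
    br (br x₁ x₂ x₃) y₂ y₃ =
      br (br x₁ y₂ y₃) x₂ x₃ + br x₁ (br x₂ y₂ y₃) x₃ + br x₁ x₂ (br x₃ y₂ y₃)

variable {F A : Type*} [Field F] [AddCommGroup A] [Module F A]

/-- `(f₁, f₂, f₃, f') ∈ Δ(A)`. -/
def IsDelta (L : ThreeLieAlgebra F A) (f₁ f₂ f₃ f' : A →ₗ[F] A) : Prop :=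
  ∀ x y z, L.br (f₁ x) y z + L.br x (f₂ y) z + L.br x y (f₃ z) = f' (L.br x y z)

/-- membership in the quasicentroid QΓ(A). -/
def InQC (L : ThreeLieAlgebra F A) (f : A →ₗ[F] A) : Prop :=
  ∀ x y z, L.br (f x) y z = L.br x (f y) z ∧ L.br x (f y) z = L.br x y (f z)

/-- membership in the centroid Γ(A). -/
def InC (L : ThreeLieAlgebra F A) (f : A →ₗ[F] A) : Prop :=
  ∀ x y z, L.br (f x) y z = f (L.br x y z) ∧ L.br x (f y) z = f (L.br x y z) ∧
    L.br x y (f z) = f (L.br x y z)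

lemma delta_bracket (L : ThreeLieAlgebra F A)
    (f f' f'' f''' g g' g'' g''' : A →ₗ[F] A)
    (hf : IsDelta L f f' f'' f''') (hg : IsDelta L g g' g'' g''') :
    IsDelta L (f ∘ₗ g - g ∘ₗ f) (f' ∘ₗ g' - g' ∘ₗ f') (f'' ∘ₗ g'' - g'' ∘ₗ f'')
      (f''' ∘ₗ g''' - g''' ∘ₗ f''') := by
  intro x y z
  have e1 := hf (g x) y z
  have e2 := hf x (g' y) z
  have e3 := hf x y (g'' z)
  have e4 := hg (f x) y z
  have e5 := hg x (f' y) z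
  have e6 := hg x y (f'' z)
  have A1 : f''' (g''' (L.br x y z)) =
      L.br (f (g x)) y z + L.br (g x) (f' y) z + L.br (g x) y (f'' z)
      + (L.br (f x) (g' y) z + L.br x (f' (g' y)) z + L.br x (g' y) (f'' z))
      + (L.br (f x) y (g'' z) + L.br x (f' y) (g'' z) + L.br x y (f'' (g'' z))) := by
    rw [← hg x y z, map_add, map_add, ← e1, ← e2, ← e3]
  have A2 : g''' (f''' (L.br x y z)) =
      L.br (g (f x)) y z + L.br (f x) (g' y) z + L.br (f x) y (g'' z)
      + (L.br (g x) (f' y) z + L.br x (g' (f' y)) z + L.br x (f' y) (g'' z))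
      + (L.br (g x) y (f'' z) + L.br x (g' y) (f'' z) + L.br x y (g'' (f'' z))) := by
    rw [← hf x y z, map_add, map_add, ← e4, ← e5, ← e6]
  simp only [LinearMap.sub_apply, LinearMap.comp_apply, map_sub]
  rw [A1, A2]
  abel

theorem stmt1 (L : ThreeLieAlgebra F A) (h2 : (2 : F) ≠ 0) (h3 : (3 : F) ≠ 0)
    (f f' f'' f''' g g' g'' g''' : A →ₗ[F] A)
    (hf : IsDelta L f f' f'' f''') (hg : IsDelta L g g' g'' g''') :
    IsDelta L (f ∘ₗ g - g ∘ₗ f) (f' ∘ₗ g' - g' ∘ₗ f') (f'' ∘ₗ g'' - g'' ∘ₗ f'')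
      (f''' ∘ₗ g''' - g''' ∘ₗ f''') ∧
    ∀ p q : A →ₗ[F] A, (∃ p₂ p₃ p', IsDelta L p p₂ p₃ p') →
      (∃ q₂ q₃ q', IsDelta L q q₂ q₃ q') →
      ∃ r₂ r₃ r', IsDelta L (p ∘ₗ q - q ∘ₗ p) r₂ r₃ r' := by
  exact ⟨delta_bracket L f f' f'' f''' g g' g'' g''' hf hg,
    fun p q ⟨p2, p3, p4, hp⟩ ⟨q2, q3, q4, hq⟩ =>
      ⟨_, _, _, delta_bracket L p p2 p3 p4 q q2 q3 q4 hp hq⟩⟩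
end

section
/- The set QDer(A) of quasiderivations of a 3-Lie algebra A is a Lie subalgebra of gl(A): if f and g are quasiderivations with associated maps f' and g', then [f,g] is a quasiderivation with associated map [f',g']. -/
variable {F A : Type*} [Field F] [AddCommGroup A] [Module F A]

theorem stmt2 (L : ThreeLieAlgebra F A) (h2 : (2 : F) ≠ 0) (h3 : (3 : F) ≠ 0)
    (f f' g g' : A →ₗ[F] A)
    (hf : IsDelta L f f f f') (hg : IsDelta L g g g g') :
    IsDelta L (f ∘ₗ g - g ∘ₗ f) (f ∘ₗ g - g ∘ₗ f) (f ∘ₗ g - g ∘ₗ f)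
      (f' ∘ₗ g' - g' ∘ₗ f') := by
  intro x y z
  have hfg : f' (g' (L.br x y z)) =
      L.br (f (g x)) y z + L.br (g x) (f y) z + L.br (g x) y (f z) +
      (L.br (f x) (g y) z + L.br x (f (g y)) z + L.br x (g y) (f z)) +
      (L.br (f x) y (g z) + L.br x (f y) (g z) + L.br x y (f (g z))) := by
    rw [← hg x y z, map_add, map_add, ← hf (g x) y z, ← hf x (g y) z, ← hf x y (g z)]
  have hgf : g' (f' (L.br x y z)) =
      L.br (g (f x)) y z + L.br (f x) (g y) z + L.br (f x) y (g z) +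
      (L.br (g x) (f y) z + L.br x (g (f y)) z + L.br x (f y) (g z)) +
      (L.br (g x) y (f z) + L.br x (g y) (f z) + L.br x y (g (f z))) := by
    rw [← hf x y z, map_add, map_add, ← hg (f x) y z, ← hg x (f y) z, ← hg x y (f z)]
  simp only [LinearMap.sub_apply, LinearMap.comp_apply, map_sub, hfg, hgf]
  abel
end

section
/- If A is a 3-Lie algebra with trivial center Z(A) = 0, then the quasicentroid QΓ(A) is commutative: for all f, g ∈ QΓ(A), f∘g = g∘f. -/
variable {F A : Type*} [Field F] [AddCommGroup A] [Module F A]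

theorem stmt3 (L : ThreeLieAlgebra F A) (h2 : (2 : F) ≠ 0) (h3 : (3 : F) ≠ 0)
    (hZ : ∀ x : A, (∀ y z, L.br x y z = 0) → x = 0)
    (f g : A →ₗ[F] A) (hf : InQC L f) (hg : InQC L g) :
    f ∘ₗ g = g ∘ₗ f := by
  ext x
  apply sub_eq_zero.mp
  apply hZ
  intro y z
  have key : L.br (f (g x)) y z = L.br (g (f x)) y z := by
    calc L.br (f (g x)) y z = L.br (g x) y (f z) := (hf (g x) y z).1.trans (hf (g x) y z).2
    _ = L.br x (g y) (f z) := (hg x y (f z)).1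
    _ = L.br (f x) (g y) z := ((hf x (g y) z).1.trans (hf x (g y) z).2).symm
    _ = L.br (g (f x)) y z := ((hg (f x) y z).1).symm
  simp [map_sub, key]
end

section
/- Every element f of the quasicentroid QΓ(A) of a 3-Lie algebra A is a generalized derivation: the quadruple (f, −(1/2)f, −(1/2)f, 0) lies in Δ(A). Hence QΓ(A) ⊆ GDer(A). -/
variable {F A : Type*} [Field F] [AddCommGroup A] [Module F A]

theorem stmt4 (L : ThreeLieAlgebra F A) (h2 : (2 : F) ≠ 0) (h3 : (3 : F) ≠ 0)
    (f : A →ₗ[F] A) (hf : InQC L f) :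
    IsDelta L f (-((2 : F)⁻¹ • f)) (-((2 : F)⁻¹ • f)) 0 ∧
      ∃ f₂ f₃ f' : A →ₗ[F] A, IsDelta L f f₂ f₃ f' := by
  have key : IsDelta L f (-((2 : F)⁻¹ • f)) (-((2 : F)⁻¹ • f)) 0 := by
    intro x y z
    obtain ⟨h1, h2'⟩ := hf x y z
    simp only [LinearMap.neg_apply, LinearMap.smul_apply, map_neg, map_smul,
      LinearMap.zero_apply]
    rw [← h1, ← h2', ← h1]
    have : L.br (f x) y z - (2:F)⁻¹ • L.br (f x) y z - (2:F)⁻¹ • L.br (f x) y z = 0 := by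
      rw [sub_sub, ← two_smul F ((2:F)⁻¹ • L.br (f x) y z), smul_smul,
        mul_inv_cancel₀ h2, one_smul, sub_self]
    linear_combination (norm := abel_nf) this
  exact ⟨key, _, _, _, key⟩
end

section
/- For any 3-Lie algebra A, [QDer(A), QΓ(A)] ⊆ QΓ(A): if f is a quasiderivation and g is in the quasicentroid, then f∘g − g∘f lies in the quasicentroid. -/
variable {F A : Type*} [Field F] [AddCommGroup A] [Module F A]

theorem stmt7 (L : ThreeLieAlgebra F A) (h2 : (2 : F) ≠ 0) (h3 : (3 : F) ≠ 0)
    (f g : A →ₗ[F] A)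
    (hf : ∃ f' : A →ₗ[F] A, IsDelta L f f f f')
    (hg : InQC L g) :
    InQC L (f ∘ₗ g - g ∘ₗ f) := by
  obtain ⟨f', hf⟩ := hf
  intro x y z
  have A1 : L.br (f (g x)) y z - L.br (g (f x)) y z =
      f' (L.br x (g y) z) - L.br x (g (f y)) z - L.br x y (g (f z)) - L.br (f x) (g y) z := by
    have e := hf (g x) y z
    rw [(hg x y z).1, (hg x (f y) z).1,
      show L.br (g x) y (f z) = L.br x y (g (f z)) from
        (hg x y (f z)).1.trans (hg x y (f z)).2] at e
    rw [(hg (f x) y z).1, ← e]; abel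
  have A2 : L.br x (f (g y)) z - L.br x (g (f y)) z =
      f' (L.br x (g y) z) - L.br x (g (f y)) z - L.br x y (g (f z)) - L.br (f x) (g y) z := by
    have e := hf x (g y) z
    rw [(hg x y (f z)).2] at e
    rw [← e]; abel
  have A3 : L.br x y (f (g z)) - L.br x y (g (f z)) =
      f' (L.br x (g y) z) - L.br x (g (f y)) z - L.br x y (g (f z)) - L.br (f x) (g y) z := by
    have e := hf x y (g z)
    rw [← (hg x y z).2, ← (hg (f x) y z).2, ← (hg x (f y) z).2] at e
    rw [← e]; abel
  constructor
  · simp only [LinearMap.sub_apply, LinearMap.comp_apply, map_sub, LinearMap.sub_apply]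
    rw [A1, A2]
  · simp only [LinearMap.sub_apply, LinearMap.comp_apply, map_sub, LinearMap.sub_apply]
    rw [A2, A3]
end

section
/- For every 3-Lie algebra A, GDer(A) = QDer(A) + QΓ(A) as a sum of subspaces. Explicitly, if (g, g', g'', g''') ∈ Δ(A), then (g + g' + g'')/3 is a quasiderivation (with associated map g'''), and (2g − g' − g'')/3, (2g' − g − g'')/3, (2g'' − g − g')/3 all lie in the quasicentroid QΓ(A). -/
variable {F A : Type*} [Field F] [AddCommGroup A] [Module F A]

theorem stmt8 (L : ThreeLieAlgebra F A) (h3 : (3 : F) ≠ 0)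
    (g g' g'' g''' : A →ₗ[F] A) (h : IsDelta L g g' g'' g''') :
    IsDelta L ((3 : F)⁻¹ • (g + g' + g'')) ((3 : F)⁻¹ • (g + g' + g''))
        ((3 : F)⁻¹ • (g + g' + g'')) g''' ∧
      InQC L ((3 : F)⁻¹ • ((2 : F) • g - g' - g'')) ∧
      InQC L ((3 : F)⁻¹ • ((2 : F) • g' - g - g'')) ∧
      InQC L ((3 : F)⁻¹ • ((2 : F) • g'' - g - g')) ∧
      ∃ q c : A →ₗ[F] A, (∃ q' : A →ₗ[F] A, IsDelta L q q q q') ∧ InQC L c ∧ g = q + c := by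
  -- cyclic symmetry of the bracket
  have cyc : ∀ x y z : A, L.br x y z = L.br y z x := by
    intro x y z
    rw [L.skew₁₂ x y z, L.skew₂₃ y x z, neg_neg]
  have sw13 : ∀ x y z : A, L.br x y z = - L.br z y x := by
    intro x y z
    rw [cyc x y z, L.skew₁₂ y z x]
  -- permuted Delta identities
  have h2 : ∀ x y z, L.br (g' x) y z + L.br x (g y) z + L.br x y (g'' z)
      = g''' (L.br x y z) := by
    intro x y z
    have key := h y x z
    rw [L.skew₁₂ (g y) x z, L.skew₁₂ y (g' x) z, L.skew₁₂ y x (g'' z),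
      L.skew₁₂ y x z, map_neg] at key
    linear_combination (norm := module) -key
  have h4 : ∀ x y z, L.br (g'' x) y z + L.br x (g' y) z + L.br x y (g z)
      = g''' (L.br x y z) := by
    intro x y z
    have key := h z y x
    rw [sw13 (g z) y x, sw13 z (g' y) x, sw13 z y (g'' x), sw13 z y x, map_neg] at key
    linear_combination (norm := module) -key
  have h5 : ∀ x y z, L.br (g x) y z + L.br x (g'' y) z + L.br x y (g' z)
      = g''' (L.br x y z) := by
    intro x y z
    have key := h x z y
    rw [L.skew₂₃ (g x) z y, L.skew₂₃ x (g' z) y, L.skew₂₃ x z (g'' y),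
      L.skew₂₃ x z y, map_neg] at key
    linear_combination (norm := module) -key
  -- D = g - g' satisfies the 1↔2 quasicentroid relation
  have hd12 : ∀ x y z, L.br (g x) y z - L.br (g' x) y z
      = L.br x (g y) z - L.br x (g' y) z := by
    intro x y z
    linear_combination (norm := module) h x y z - h2 x y z
  -- and then all slots, via cyclicity
  have hd13 : ∀ x y z, L.br (g x) y z - L.br (g' x) y z
      = L.br x y (g z) - L.br x y (g' z) := by
    intro x y z
    have e1 : L.br x y (g z) - L.br x y (g' z)
        = L.br (g z) x y - L.br (g' z) x y := by
      rw [cyc (g z) x y, cyc (g' z) x y]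
    rw [e1, hd12 z x y, cyc z (g x) y, cyc z (g' x) y]
  have hd23 : ∀ x y z, L.br x (g y) z - L.br x (g' y) z
      = L.br x y (g z) - L.br x y (g' z) := by
    intro x y z
    rw [← hd12, hd13]
  -- E = g - g'' satisfies the 1↔3 quasicentroid relation
  have he13 : ∀ x y z, L.br (g x) y z - L.br (g'' x) y z
      = L.br x y (g z) - L.br x y (g'' z) := by
    intro x y z
    linear_combination (norm := module) h x y z - h4 x y z
  have he12 : ∀ x y z, L.br (g x) y z - L.br (g'' x) y z
      = L.br x (g y) z - L.br x (g'' y) z := by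
    intro x y z
    have e1 : L.br x (g y) z - L.br x (g'' y) z
        = L.br (g y) z x - L.br (g'' y) z x := by
      rw [cyc x (g y) z, cyc x (g'' y) z]
    rw [e1, he13 y z x, ← cyc (g x) y z, ← cyc (g'' x) y z]
  have he23 : ∀ x y z, L.br x (g y) z - L.br x (g'' y) z
      = L.br x y (g z) - L.br x y (g'' z) := by
    intro x y z
    rw [← he12, he13]
  -- the quasiderivation part
  have hq : IsDelta L ((3 : F)⁻¹ • (g + g' + g'')) ((3 : F)⁻¹ • (g + g' + g''))
      ((3 : F)⁻¹ • (g + g' + g'')) g''' := by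
    intro x y z
    have key : (3 : F)⁻¹ • ((L.br (g' x) y z + L.br x (g y) z + L.br x y (g'' z))
        + (L.br (g'' x) y z + L.br x (g' y) z + L.br x y (g z))
        + (L.br (g x) y z + L.br x (g'' y) z + L.br x y (g' z)))
        = g''' (L.br x y z) := by
      rw [h2 x y z, h4 x y z, h5 x y z]
      rw [show g''' (L.br x y z) + g''' (L.br x y z) + g''' (L.br x y z)
          = (3 : F) • g''' (L.br x y z) from by module]
      rw [smul_smul, inv_mul_cancel₀ h3, one_smul]
    simp only [LinearMap.smul_apply, LinearMap.add_apply, map_smul, map_add,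
      LinearMap.smul_apply, LinearMap.add_apply] at key ⊢
    linear_combination (norm := module) key
  -- quasicentroid membership from full sets of relations
  have mk : ∀ f : A →ₗ[F] A,
      (∀ x y z, L.br (f x) y z = L.br x (f y) z) →
      (∀ x y z, L.br x (f y) z = L.br x y (f z)) → InQC L f :=
    fun f p q x y z => ⟨p x y z, q x y z⟩
  have hc1 : InQC L ((3 : F)⁻¹ • ((2 : F) • g - g' - g'')) := by
    refine mk _ (fun x y z => ?_) (fun x y z => ?_) <;>
      simp only [LinearMap.smul_apply, LinearMap.sub_apply, map_smul, map_sub,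
        LinearMap.smul_apply, LinearMap.sub_apply]
    · linear_combination (norm := module) (3 : F)⁻¹ • (hd12 x y z + he12 x y z)
    · linear_combination (norm := module) (3 : F)⁻¹ • (hd23 x y z + he23 x y z)
  have hc2 : InQC L ((3 : F)⁻¹ • ((2 : F) • g' - g - g'')) := by
    refine mk _ (fun x y z => ?_) (fun x y z => ?_) <;>
      simp only [LinearMap.smul_apply, LinearMap.sub_apply, map_smul, map_sub,
        LinearMap.smul_apply, LinearMap.sub_apply]
    · linear_combination (norm := module) (3 : F)⁻¹ • (he12 x y z - (2:F) • hd12 x y z)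
    · linear_combination (norm := module) (3 : F)⁻¹ • (he23 x y z - (2:F) • hd23 x y z)
  have hc3 : InQC L ((3 : F)⁻¹ • ((2 : F) • g'' - g - g')) := by
    refine mk _ (fun x y z => ?_) (fun x y z => ?_) <;>
      simp only [LinearMap.smul_apply, LinearMap.sub_apply, map_smul, map_sub,
        LinearMap.smul_apply, LinearMap.sub_apply]
    · linear_combination (norm := module) (3 : F)⁻¹ • (hd12 x y z - (2:F) • he12 x y z)
    · linear_combination (norm := module) (3 : F)⁻¹ • (hd23 x y z - (2:F) • he23 x y z)
  refine ⟨hq, hc1, hc2, hc3,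
    (3 : F)⁻¹ • (g + g' + g''), (3 : F)⁻¹ • ((2 : F) • g - g' - g''),
    ⟨g''', hq⟩, hc1, ?_⟩
  ext a
  simp only [LinearMap.add_apply, LinearMap.smul_apply, LinearMap.sub_apply]
  match_scalars <;> field_simp <;> norm_num
end

section
/- QΓ(A) is an ideal of the Lie algebra GDer(A): for every generalized derivation g and every f ∈ QΓ(A), the commutator [g, f] lies in QΓ(A). If moreover Z(A) = 0, then QΓ(A) is an abelian ideal of GDer(A). -/
variable {F A : Type*} [Field F] [AddCommGroup A] [Module F A]

theorem stmt9 (L : ThreeLieAlgebra F A) (h2 : (2 : F) ≠ 0) (h3 : (3 : F) ≠ 0)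
    (g f : A →ₗ[F] A)
    (hg : ∃ g' g'' g''' : A →ₗ[F] A, IsDelta L g g' g'' g''')
    (hf : InQC L f) :
    InQC L (g ∘ₗ f - f ∘ₗ g) ∧
      ((∀ x : A, (∀ y z, L.br x y z = 0) → x = 0) →
        ∀ f₁ f₂ : A →ₗ[F] A, InQC L f₁ → InQC L f₂ →
          f₁ ∘ₗ f₂ - f₂ ∘ₗ f₁ = 0) := by
  obtain ⟨g', g'', g''', hgd⟩ := hg
  have cyc : ∀ x y z : A, L.br x y z = L.br y z x := by
    intro x y z
    rw [L.skew₁₂ x y z, L.skew₂₃ y x z, neg_neg]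
  have f12 : ∀ x y z, L.br (f x) y z = L.br x (f y) z := fun x y z => (hf x y z).1
  have f23 : ∀ x y z, L.br x (f y) z = L.br x y (f z) := fun x y z => (hf x y z).2
  have f13 : ∀ x y z, L.br (f x) y z = L.br x y (f z) :=
    fun x y z => (f12 x y z).trans (f23 x y z)
  have aux : ∀ {a b c d : A}, a + b + c = d → a = d - b - c := by
    intro a b c d h
    rw [eq_sub_iff_add_eq, eq_sub_iff_add_eq, add_right_comm]
    exact h
  have hgd1 : ∀ x y z, L.br (g x) y z
      = g''' (L.br x y z) - L.br x (g' y) z - L.br x y (g'' z) :=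
    fun x y z => aux (hgd x y z)
  have hgd2 : ∀ x y z, L.br x (g y) z
      = g''' (L.br x y z) - L.br (g' x) y z - L.br x y (g'' z) := by
    intro x y z
    rw [L.skew₁₂ x (g y) z, hgd1 y x z, L.skew₁₂ y (g' x) z, L.skew₁₂ y x (g'' z),
      L.skew₁₂ y x z, map_neg]
    abel
  have hgd3 : ∀ x y z, L.br x y (g z)
      = g''' (L.br x y z) - L.br (g' x) y z - L.br x (g'' y) z := by
    intro x y z
    rw [← cyc (g z) x y, hgd1 z x y, cyc z (g' x) y, cyc z x (g'' y), cyc z x y]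
  have R1 : ∀ x y z, L.br (g (f x)) y z - L.br (f (g x)) y z
      = L.br x y (g'' (f z)) - L.br x y (f (g'' z)) := by
    intro x y z
    rw [hgd1 (f x) y z, f13 (g x) y z, hgd1 x y (f z), f13 x y z, f13 x (g' y) z,
      f13 x y (g'' z)]
    abel
  have R2 : ∀ x y z, L.br x (g (f y)) z - L.br x (f (g y)) z
      = L.br x y (g'' (f z)) - L.br x y (f (g'' z)) := by
    intro x y z
    rw [hgd2 x (f y) z, f23 x (g y) z, hgd2 x y (f z), f23 x y z, f23 (g' x) y z,
      f23 x y (g'' z)]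
    abel
  have R2' : ∀ x y z, L.br x (g (f y)) z - L.br x (f (g y)) z
      = L.br (g' (f x)) y z - L.br (f (g' x)) y z := by
    intro x y z
    rw [hgd2 x (f y) z, ← f12 x (g y) z, hgd2 (f x) y z, ← f12 x y z,
      ← f12 (g' x) y z, ← f12 x y (g'' z)]
    abel
  have R3' : ∀ x y z, L.br x y (g (f z)) - L.br x y (f (g z))
      = L.br (g' (f x)) y z - L.br (f (g' x)) y z := by
    intro x y z
    rw [hgd3 x y (f z), ← f13 x y (g z), hgd3 (f x) y z, ← f13 x y z,
      ← f13 (g' x) y z, ← f13 x (g'' y) z]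
    abel
  constructor
  · refine fun x y z => ⟨?_, ?_⟩
    · simp only [LinearMap.sub_apply, LinearMap.comp_apply, map_sub]
      exact (R1 x y z).trans (R2 x y z).symm
    · simp only [LinearMap.sub_apply, LinearMap.comp_apply, map_sub]
      exact (R2' x y z).trans (R3' x y z).symm
  · intro hZ f₁ f₂ h1 h2'
    ext x
    simp only [LinearMap.sub_apply, LinearMap.comp_apply, LinearMap.zero_apply]
    apply hZ
    intro y z
    rw [map_sub, LinearMap.sub_apply, LinearMap.sub_apply, sub_eq_zero,
      (h1 (f₂ x) y z).1, (h2' x (f₁ y) z).1.trans (h2' x (f₁ y) z).2,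
      (h2' (f₁ x) y z).1.trans (h2' (f₁ x) y z).2, (h1 x y (f₂ z)).1]
end

section
/- Let A be a 3-Lie algebra, Ã = A⊗(tF[t]/(t⁴)) the 3-Lie algebra with bracket [a₁t, a₂t, a₃t] = [a₁,a₂,a₃]t³ and all other triple brackets involving t² or t³ components equal to zero. Fix a subspace U with A = U ⊕ A¹. For a quasiderivation f with associated map f', define l_U(f)(at + bt² + ct³ + ut³) = f(a)t + f'(c)t³ for a, b ∈ A, c ∈ A¹, u ∈ U. Then l_U(f) is a derivation of Ã. -/
variable {F A : Type*} [Field F] [AddCommGroup A] [Module F A]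

/-- The bracket of `Ã = At ⊕ At² ⊕ At³`, modelled as `A × A × A`
(first / second / third components = coefficients of `t`, `t²`, `t³`):
`[a₁t, a₂t, a₃t] = [a₁,a₂,a₃]t³`, all other triple brackets vanish. -/
def brTilde (L : ThreeLieAlgebra F A) (u v w : A × A × A) : A × A × A :=
  (0, 0, L.br u.1 v.1 w.1)

/-- The map `l_U(f)` : `at + bt² + ct³ + ut³ ↦ f(a)t + f'(c)t³`; here `g = f' ∘ π`
where `π` is the projection of `A` onto `A¹` along `U`. -/
def lU (f g : A →ₗ[F] A) : (A × A × A) →ₗ[F] (A × A × A) :=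
  (f ∘ₗ LinearMap.fst F A (A × A)).prod
    ((0 : (A × A × A) →ₗ[F] A).prod
      (g ∘ₗ LinearMap.snd F A A ∘ₗ LinearMap.snd F A (A × A)))

section

variable (L : ThreeLieAlgebra F A) (f g : A →ₗ[F] A)

@[simp]
lemma lU_apply (u : A × A × A) : lU f g u = (f u.1, 0, g u.2.2) := rfl

@[simp]
lemma brTilde_apply (u v w : A × A × A) : brTilde L u v w = (0, 0, L.br u.1 v.1 w.1) := rfl

/-- Only the `t`-components enter a bracket of `Ã`, and `l_U` acts on them by `f`, so the
derivation rule reduces to the rule for `g` on brackets of `A`. -/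
lemma lU_isDerivation_of_map_br
    (hg : ∀ x y z, g (L.br x y z) = L.br (f x) y z + L.br x (f y) z + L.br x y (f z))
    (u v w : A × A × A) :
    lU f g (brTilde L u v w)
      = brTilde L (lU f g u) v w + brTilde L u (lU f g v) w + brTilde L u v (lU f g w) := by
  simp [hg]

end

theorem stmt11_general (L : ThreeLieAlgebra F A)
    (f f' : A →ₗ[F] A) (hf : IsDelta L f f f f')
    (π : A →ₗ[F] A)
    (hπ_id : ∀ x ∈ Submodule.span F {w : A | ∃ a b c, w = L.br a b c}, π x = x) :
    ∀ u v w : A × A × A,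
      lU f (f' ∘ₗ π) (brTilde L u v w)
        = brTilde L (lU f (f' ∘ₗ π) u) v w + brTilde L u (lU f (f' ∘ₗ π) v) w
          + brTilde L u v (lU f (f' ∘ₗ π) w) := by
  refine lU_isDerivation_of_map_br L f _ fun x y z => ?_
  rw [LinearMap.comp_apply, hπ_id _ (Submodule.subset_span ⟨x, y, z, rfl⟩), hf]

theorem stmt11 (L : ThreeLieAlgebra F A)
    (f f' : A →ₗ[F] A) (hf : IsDelta L f f f f')
    (π : A →ₗ[F] A)
    (hπ_range : ∀ x : A, π x ∈ Submodule.span F {w : A | ∃ a b c, w = L.br a b c})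
    (hπ_proj : π ∘ₗ π = π)
    (hπ_id : ∀ x ∈ Submodule.span F {w : A | ∃ a b c, w = L.br a b c}, π x = x) :
    ∀ u v w : A × A × A,
      lU f (f' ∘ₗ π) (brTilde L u v w)
        = brTilde L (lU f (f' ∘ₗ π) u) v w + brTilde L u (lU f (f' ∘ₗ π) v) w
          + brTilde L u v (lU f (f' ∘ₗ π) w) :=
  stmt11_general L f f' hf π hπ_id
end

section
/- Let A be a 3-Lie algebra and for t₁, t₂ ∈ A define (t₁,t₂)·f = ad(t₁,t₂)∘f − f∘ad(t₁,t₂) on End(A). If f is a quasiderivation with associated map f', then (t₁,t₂)·f is a quasiderivation with associated map ad(t₁,t₂)∘f' − f'∘ad(t₁,t₂). -/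
variable {F A : Type*} [Field F] [AddCommGroup A] [Module F A]

theorem stmt12 (L : ThreeLieAlgebra F A) (t₁ t₂ : A)
    (f f' : A →ₗ[F] A) (hf : IsDelta L f f f f') :
    IsDelta L (L.br t₁ t₂ ∘ₗ f - f ∘ₗ L.br t₁ t₂) (L.br t₁ t₂ ∘ₗ f - f ∘ₗ L.br t₁ t₂)
      (L.br t₁ t₂ ∘ₗ f - f ∘ₗ L.br t₁ t₂) (L.br t₁ t₂ ∘ₗ f' - f' ∘ₗ L.br t₁ t₂) := by
  have swap : ∀ a : A, L.br a t₁ t₂ = L.br t₁ t₂ a := by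
    intro a
    rw [L.skew₁₂ a t₁ t₂, L.skew₂₃ t₁ a t₂, neg_neg]
  have hD : ∀ a b c : A, L.br t₁ t₂ (L.br a b c) =
      L.br (L.br t₁ t₂ a) b c + L.br a (L.br t₁ t₂ b) c + L.br a b (L.br t₁ t₂ c) := by
    intro a b c
    have := L.fund a b c t₁ t₂
    rw [swap, swap, swap, swap] at this
    exact this
  intro x y z
  simp only [LinearMap.sub_apply, LinearMap.comp_apply]
  have e1 := hf (L.br t₁ t₂ x) y z
  have e2 := hf x (L.br t₁ t₂ y) z
  have e3 := hf x y (L.br t₁ t₂ z)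
  rw [← hf x y z, map_add, map_add, hD (f x) y z, hD x (f y) z, hD x y (f z),
    hD x y z, map_add, map_add, ← e1, ← e2, ← e3]
  simp only [map_sub, LinearMap.sub_apply]
  abel
end

section
/- If f belongs to the quasicentroid of a 3-Lie algebra A, then for all x, y ∈ A the operators ad(x,y) and ad(f(x),y) commute: ad(x,y)∘ad(f(x),y) = ad(f(x),y)∘ad(x,y). -/
variable {F A : Type*} [Field F] [AddCommGroup A] [Module F A]

theorem stmt15 (L : ThreeLieAlgebra F A) (h2 : (2 : F) ≠ 0) (h3 : (3 : F) ≠ 0)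
    (f : A →ₗ[F] A) (hf : InQC L f) (x y : A) :
    L.br x y ∘ₗ L.br (f x) y = L.br (f x) y ∘ₗ L.br x y := by
  have half : ∀ v : A, v = -v → v = 0 := by
    intro v hv
    have h2v : (2 : F) • v = 0 := by
      rw [two_smul]
      nth_rewrite 1 [hv]
      exact neg_add_cancel v
    rcases smul_eq_zero.mp h2v with h | h
    · exact absurd h h2
    · exact h
  have cyc : ∀ a b c : A, L.br a b c = L.br b c a := by
    intro a b c
    rw [L.skew₁₂ a b c, L.skew₂₃ b a c, neg_neg]
  have hyyx : L.br y y x = 0 := half _ (L.skew₁₂ y y x)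
  have hyxy : L.br y x y = 0 := by rw [L.skew₂₃ y x y, hyyx, neg_zero]
  have hfxxy : L.br (f x) x y = 0 := by
    apply half
    nth_rewrite 1 [(hf x x y).1]
    exact L.skew₁₂ x (f x) y
  apply LinearMap.ext
  intro z
  simp only [LinearMap.comp_apply]
  have hfund := L.fund (f x) y z x y
  rw [hfxxy, hyxy] at hfund
  simp only [map_zero, LinearMap.zero_apply, LinearMap.map_zero, zero_add] at hfund
  calc L.br x y (L.br (f x) y z) = L.br (L.br (f x) y z) x y :=
        (cyc (L.br (f x) y z) x y).symm
    _ = L.br (f x) y (L.br z x y) := hfund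
    _ = L.br (f x) y (L.br x y z) := congrArg _ (cyc z x y)
end

section
/- If f is in the quasicentroid of a 3-Lie algebra A, then for all x, y ∈ A and every positive integer m: ad^m(f(x), y) = ad^m(x, y) ∘ f^m, and ad^{m+1}(x, y) ∘ f = ad(f(x), y) ∘ ad^m(x, y). -/
variable {F A : Type*} [Field F] [AddCommGroup A] [Module F A]

section Aux

variable (L : ThreeLieAlgebra F A)

lemma aux_neg_self_zero (h2 : (2 : F) ≠ 0) {v : A} (h : v = -v) : v = 0 := by
  have h' : (2 : F) • v = 0 := by
    rw [two_smul]
    nth_rewrite 1 [h]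
    exact neg_add_cancel v
  rcases smul_eq_zero.mp h' with h'' | h''
  · exact absurd h'' h2
  · exact h''

lemma aux_self12 (h2 : (2 : F) ≠ 0) (a c : A) : L.br a a c = 0 :=
  aux_neg_self_zero h2 (L.skew₁₂ a a c)

lemma aux_self23 (h2 : (2 : F) ≠ 0) (a b : A) : L.br a b b = 0 :=
  aux_neg_self_zero h2 (L.skew₂₃ a b b)

lemma aux_cyc (a b c : A) : L.br a b c = L.br b c a := by
  rw [L.skew₁₂ a b c, L.skew₂₃ b a c, neg_neg]

lemma aux_qc3 (f : Module.End F A) (hf : InQC L f) (x y z : A) :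
    L.br (f x) y z = L.br x y (f z) := (hf x y z).1.trans (hf x y z).2

lemma aux_xfx (h2 : (2 : F) ≠ 0) (f : Module.End F A) (hf : InQC L f) (x c : A) :
    L.br x (f x) c = 0 := by
  exact aux_neg_self_zero h2 ((hf x x c).1.symm.trans (L.skew₁₂ (f x) x c))

/-- `ad(f x, y) = ad(x, y) ∘ f`. -/
lemma aux_key (f : Module.End F A) (hf : InQC L f) (x y : A) :
    (L.br (f x) y : Module.End F A) = (L.br x y : Module.End F A) * f := by
  ext z
  exact aux_qc3 L f hf x y z

/-- `ad(f x, y)` commutes with `ad(x, y)`. -/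
lemma aux_comm (h2 : (2 : F) ≠ 0) (f : Module.End F A) (hf : InQC L f) (x y : A) :
    Commute (L.br (f x) y : Module.End F A) (L.br x y : Module.End F A) := by
  ext z
  show L.br (f x) y (L.br x y z) = L.br x y (L.br (f x) y z)
  have lhs : L.br (f x) y (L.br x y z) = L.br (L.br x y z) (f x) y := by
    rw [aux_cyc L (L.br x y z) (f x) y, aux_cyc L (f x) y (L.br x y z)]
  rw [lhs, L.fund x y z (f x) y, aux_xfx L h2 f hf x y,
    aux_cyc L y (f x) y, aux_self23 L h2 (f x) y, aux_cyc L z (f x) y]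
  simp

end Aux

theorem stmt16 (L : ThreeLieAlgebra F A) (h2 : (2 : F) ≠ 0) (h3 : (3 : F) ≠ 0)
    (f : Module.End F A) (hf : InQC L f) (x y : A) (m : ℕ) (hm : 0 < m) :
    (L.br (f x) y : Module.End F A) ^ m = (L.br x y : Module.End F A) ^ m * f ^ m ∧
      (L.br x y : Module.End F A) ^ (m + 1) * f
        = (L.br (f x) y : Module.End F A) * (L.br x y : Module.End F A) ^ m := by
  set B : Module.End F A := (L.br x y : Module.End F A) with hB
  set C : Module.End F A := (L.br (f x) y : Module.End F A) with hC
  have hkey : C = B * f := aux_key L f hf x y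
  have hcomm : Commute C B := aux_comm L h2 f hf x y
  constructor
  · clear hm
    induction m with
    | zero => simp
    | succ n ih =>
      calc C ^ (n + 1) = C * C ^ n := (pow_succ' C n)
        _ = C * (B ^ n * f ^ n) := by rw [ih]
        _ = (C * B ^ n) * f ^ n := by rw [mul_assoc]
        _ = (B ^ n * C) * f ^ n := by rw [(hcomm.pow_right n).eq]
        _ = B ^ n * (B * f) * f ^ n := by rw [hkey]
        _ = (B ^ n * B) * (f * f ^ n) := by rw [mul_assoc, mul_assoc, mul_assoc]
        _ = B ^ (n + 1) * f ^ (n + 1) := by rw [← pow_succ, ← pow_succ']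
  · calc B ^ (m + 1) * f = (B ^ m * B) * f := by rw [pow_succ]
      _ = B ^ m * (B * f) := by rw [mul_assoc]
      _ = B ^ m * C := by rw [hkey]
      _ = C * B ^ m := ((hcomm.pow_right m).eq).symm
end

section
/- Let A be a 3-Lie algebra decomposing as A = A₁ ⊕ A₂ with [A₁, A₂, A] = 0. Then QΓ(A) = QΓ(A₁) + QΓ(A₂) + Γ₁ + Γ₂, where Γᵢ = {f ∈ Hom(Aᵢ, Aⱼ) : f(Aᵢ) ⊆ Z(Aⱼ)} for {i,j} = {1,2} (all maps extended by zero to A). -/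
variable {F A : Type*} [Field F] [AddCommGroup A] [Module F A]

section Projection

variable {R M : Type*} [Ring R] [AddCommGroup M] [Module R M] {p q : Submodule R M}

theorem LinearMap.eq_add_projection_comp_comp (hpq : IsCompl p q) (f : M →ₗ[R] M) :
    f = p.projection q hpq ∘ₗ f ∘ₗ p.projection q hpq +
      q.projection p hpq.symm ∘ₗ f ∘ₗ q.projection p hpq.symm +
      q.projection p hpq.symm ∘ₗ f ∘ₗ p.projection q hpq +
      p.projection q hpq ∘ₗ f ∘ₗ q.projection p hpq.symm := by
  conv_lhs => rw [← LinearMap.id_comp f, ← LinearMap.comp_id (LinearMap.id ∘ₗ f),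
    ← Submodule.projection_add_projection_eq_id hpq]
  simp only [LinearMap.add_comp, LinearMap.comp_add, LinearMap.comp_assoc]
  abel

theorem LinearMap.apply_projection_of_eq_zero_on (hpq : IsCompl p q) {f : M →ₗ[R] M}
    (hf : ∀ x ∈ q, f x = 0) (x : M) : f (p.projection q hpq x) = f x := by
  conv_rhs => rw [← Submodule.projection_add_projection_eq_self hpq x]
  rw [map_add, hf _ (Submodule.projection_apply_mem _ _), add_zero]

end Projection

theorem InQC.add {L : ThreeLieAlgebra F A} {f g : A →ₗ[F] A} (hf : InQC L f) (hg : InQC L g) :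
    InQC L (f + g) := by
  intro x y z
  simp only [LinearMap.add_apply, map_add, (hf x y z).1, (hf x y z).2, (hg x y z).1, (hg x y z).2,
    and_self]

/-- `f ∈ QΓ(A₁)`, extended by zero on `A₂`. -/
def InQCOfSummand (L : ThreeLieAlgebra F A) (A₁ A₂ : Submodule F A) (f : A →ₗ[F] A) : Prop :=
  (∀ x ∈ A₁, f x ∈ A₁) ∧ (∀ x ∈ A₂, f x = 0) ∧
    ∀ x ∈ A₁, ∀ y ∈ A₁, ∀ z ∈ A₁,
      L.br (f x) y z = L.br x (f y) z ∧ L.br x (f y) z = L.br x y (f z)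

/-- `f ∈ Hom(A₁, Z(A₂))`, extended by zero on `A₂`. -/
def InHomToCenter (L : ThreeLieAlgebra F A) (A₁ A₂ : Submodule F A) (f : A →ₗ[F] A) : Prop :=
  (∀ x ∈ A₁, f x ∈ A₂ ∧ ∀ y ∈ A₂, ∀ z ∈ A₂, L.br (f x) y z = 0) ∧ ∀ x ∈ A₂, f x = 0

namespace ThreeLieAlgebra

variable (L : ThreeLieAlgebra F A)

theorem br_cycle (x y z : A) : L.br x y z = L.br z x y := by
  rw [L.skew₂₃ x y z, L.skew₁₂ x z y, neg_neg]

/-- `[A₁, A₂, A] = 0`. -/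
def IsOrthogonal (A₁ A₂ : Submodule F A) : Prop :=
  ∀ x ∈ A₁, ∀ y ∈ A₂, ∀ z, L.br x y z = 0

variable {L} {A₁ A₂ : Submodule F A}

theorem IsOrthogonal.symm (ho : L.IsOrthogonal A₁ A₂) : L.IsOrthogonal A₂ A₁ := by
  intro x hx y hy z
  rw [L.skew₁₂, ho y hy x hx z, neg_zero]

theorem IsOrthogonal.br_eq_br_projection_of_mem_left (hc : IsCompl A₁ A₂)
    (ho : L.IsOrthogonal A₁ A₂) {x : A} (hx : x ∈ A₁) (y z : A) :
    L.br x y z = L.br x (A₁.projection A₂ hc y) (A₁.projection A₂ hc z) := by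
  have hy := Submodule.projection_add_projection_eq_self hc y
  have hz := Submodule.projection_add_projection_eq_self hc z
  conv_lhs => rw [← hy, ← hz]
  have h₂ {u : A} : u ∈ A₂ → ∀ v, L.br x u v = 0 := ho x hx u
  have h₃ {u : A} (hu : u ∈ A₂) (v : A) : L.br x v u = 0 := by rw [L.skew₂₃, h₂ hu, neg_zero]
  simp only [map_add, LinearMap.add_apply, h₂ (Submodule.projection_apply_mem _ _),
    h₃ (Submodule.projection_apply_mem _ _), add_zero]

theorem IsOrthogonal.br_eq_add_br_projection (hc : IsCompl A₁ A₂) (ho : L.IsOrthogonal A₁ A₂)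
    (x y z : A) :
    L.br x y z =
      L.br (A₁.projection A₂ hc x) (A₁.projection A₂ hc y) (A₁.projection A₂ hc z) +
        L.br (A₂.projection A₁ hc.symm x) (A₂.projection A₁ hc.symm y)
          (A₂.projection A₁ hc.symm z) := by
  conv_lhs => rw [← Submodule.projection_add_projection_eq_self hc x]
  rw [map_add, LinearMap.add_apply, LinearMap.add_apply,
    ho.br_eq_br_projection_of_mem_left hc (Submodule.projection_apply_mem _ _),
    ho.symm.br_eq_br_projection_of_mem_left hc.symm (Submodule.projection_apply_mem _ _)]

theorem IsOrthogonal.br_eq_br_projection_of_mem (hc : IsCompl A₁ A₂)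
    (ho : L.IsOrthogonal A₁ A₂) {x y z : A} (h : x ∈ A₁ ∨ y ∈ A₁ ∨ z ∈ A₁) :
    L.br x y z =
      L.br (A₁.projection A₂ hc x) (A₁.projection A₂ hc y) (A₁.projection A₂ hc z) := by
  have hker {u : A} (hu : u ∈ A₁) : A₂.projection A₁ hc.symm u = 0 :=
    Submodule.projection_apply_of_mem_right hc.symm hu
  rw [ho.br_eq_add_br_projection hc, add_eq_left]
  rcases h with hx | hy | hz
  · rw [hker hx, map_zero, LinearMap.zero_apply, LinearMap.zero_apply]
  · rw [hker hy, map_zero, LinearMap.zero_apply]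
  · rw [hker hz, map_zero]

end ThreeLieAlgebra

section Decomposition

open ThreeLieAlgebra

variable {L : ThreeLieAlgebra F A} {A₁ A₂ : Submodule F A}

theorem InQC.inQCOfSummand {g : A →ₗ[F] A} (hg : InQC L g) (hc : IsCompl A₁ A₂)
    (ho : L.IsOrthogonal A₁ A₂) :
    InQCOfSummand L A₁ A₂ (A₁.projection A₂ hc ∘ₗ g ∘ₗ A₁.projection A₂ hc) := by
  refine ⟨fun x _ ↦ Submodule.projection_apply_mem _ _, fun x hx ↦ ?_, fun x hx y hy z hz ↦ ?_⟩
  · rw [LinearMap.comp_apply, LinearMap.comp_apply,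
      Submodule.projection_apply_of_mem_right hc hx, map_zero, map_zero]
  · have hself {u : A} (hu : u ∈ A₁) : A₁.projection A₂ hc u = u :=
      Submodule.projection_apply_of_mem_left hc hu
    obtain ⟨h₁₂, h₂₃⟩ := hg x y z
    rw [ho.br_eq_br_projection_of_mem hc (Or.inr (Or.inl hy)),
      ho.br_eq_br_projection_of_mem hc (Or.inl hx)] at h₁₂
    rw [ho.br_eq_br_projection_of_mem hc (Or.inl hx),
      ho.br_eq_br_projection_of_mem hc (Or.inl hx)] at h₂₃
    simp only [LinearMap.comp_apply, hself hx, hself hy, hself hz] at h₁₂ h₂₃ ⊢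
    exact ⟨h₁₂, h₂₃⟩

theorem InQC.inHomToCenter {g : A →ₗ[F] A} (hg : InQC L g) (hc : IsCompl A₁ A₂)
    (ho : L.IsOrthogonal A₁ A₂) :
    InHomToCenter L A₁ A₂ (A₂.projection A₁ hc.symm ∘ₗ g ∘ₗ A₁.projection A₂ hc) := by
  refine ⟨fun x hx ↦ ⟨Submodule.projection_apply_mem _ _, fun y hy z hz ↦ ?_⟩, fun x hx ↦ ?_⟩
  · have hself {u : A} (hu : u ∈ A₂) : A₂.projection A₁ hc.symm u = u :=
      Submodule.projection_apply_of_mem_left hc.symm hu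
    have hgx : L.br (g x) y z = L.br (A₂.projection A₁ hc.symm (g x)) y z := by
      rw [ho.symm.br_eq_br_projection_of_mem hc.symm (Or.inr (Or.inl hy)), hself hy, hself hz]
    rw [LinearMap.comp_apply, LinearMap.comp_apply, Submodule.projection_apply_of_mem_left hc hx,
      ← hgx, (hg x y z).1, ho.symm.br_eq_br_projection_of_mem hc.symm (Or.inr (Or.inr hz)),
      Submodule.projection_apply_of_mem_right hc.symm hx, map_zero, LinearMap.zero_apply,
      LinearMap.zero_apply]
  · rw [LinearMap.comp_apply, LinearMap.comp_apply,
      Submodule.projection_apply_of_mem_right hc hx, map_zero, map_zero]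

theorem InQCOfSummand.inQC {f : A →ₗ[F] A} (hf : InQCOfSummand L A₁ A₂ f) (hc : IsCompl A₁ A₂)
    (ho : L.IsOrthogonal A₁ A₂) : InQC L f := by
  obtain ⟨hmaps, hker, hq⟩ := hf
  have hp := Submodule.projection_apply_mem (p := A₁) hc
  have hfp := LinearMap.apply_projection_of_eq_zero_on hc hker
  have hmem (u : A) : f u ∈ A₁ := hfp u ▸ hmaps _ (hp u)
  have hself (u : A) : A₁.projection A₂ hc (f u) = f u :=
    Submodule.projection_apply_of_mem_left hc (hmem u)
  intro x y z
  rw [ho.br_eq_br_projection_of_mem hc (Or.inl (hmem x)),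
    ho.br_eq_br_projection_of_mem hc (Or.inr (Or.inl (hmem y))),
    ho.br_eq_br_projection_of_mem hc (Or.inr (Or.inr (hmem z))), hself, hself, hself,
    ← hfp x, ← hfp y, ← hfp z]
  exact hq _ (hp x) _ (hp y) _ (hp z)

theorem InHomToCenter.inQC {f : A →ₗ[F] A} (hf : InHomToCenter L A₁ A₂ f) (hc : IsCompl A₁ A₂)
    (ho : L.IsOrthogonal A₁ A₂) : InQC L f := by
  obtain ⟨hmaps, hker⟩ := hf
  have hp := Submodule.projection_apply_mem (p := A₁) hc
  have hfp := LinearMap.apply_projection_of_eq_zero_on hc hker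
  have hmem (u : A) : f u ∈ A₂ := hfp u ▸ (hmaps _ (hp u)).1
  have hzero (u v w : A) : L.br (f u) v w = 0 := by
    rw [ho.symm.br_eq_br_projection_of_mem hc.symm (Or.inl (hmem u)),
      Submodule.projection_apply_of_mem_left hc.symm (hmem u), ← hfp u]
    exact (hmaps _ (hp u)).2 _ (Submodule.projection_apply_mem _ _) _
      (Submodule.projection_apply_mem _ _)
  intro x y z
  rw [L.skew₁₂ x (f y), L.br_cycle x y (f z), hzero, hzero, hzero, neg_zero]
  exact ⟨rfl, rfl⟩

end Decomposition

theorem stmt19_general (L : ThreeLieAlgebra F A)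
    (A₁ A₂ : Submodule F A) (hcompl : IsCompl A₁ A₂)
    (hmix : ∀ x ∈ A₁, ∀ y ∈ A₂, ∀ z : A, L.br x y z = 0)
    (g : A →ₗ[F] A) :
    InQC L g ↔
      ∃ g₁ g₂ h₁ h₂ : A →ₗ[F] A,
        g = g₁ + g₂ + h₁ + h₂ ∧
        ((∀ x ∈ A₁, g₁ x ∈ A₁) ∧ (∀ x ∈ A₂, g₁ x = 0) ∧
          ∀ x ∈ A₁, ∀ y ∈ A₁, ∀ z ∈ A₁,
            L.br (g₁ x) y z = L.br x (g₁ y) z ∧ L.br x (g₁ y) z = L.br x y (g₁ z)) ∧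
        ((∀ x ∈ A₂, g₂ x ∈ A₂) ∧ (∀ x ∈ A₁, g₂ x = 0) ∧
          ∀ x ∈ A₂, ∀ y ∈ A₂, ∀ z ∈ A₂,
            L.br (g₂ x) y z = L.br x (g₂ y) z ∧ L.br x (g₂ y) z = L.br x y (g₂ z)) ∧
        ((∀ x ∈ A₁, h₁ x ∈ A₂ ∧ ∀ y ∈ A₂, ∀ z ∈ A₂, L.br (h₁ x) y z = 0) ∧
          ∀ x ∈ A₂, h₁ x = 0) ∧
        ((∀ x ∈ A₂, h₂ x ∈ A₁ ∧ ∀ y ∈ A₁, ∀ z ∈ A₁, L.br (h₂ x) y z = 0) ∧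
          ∀ x ∈ A₁, h₂ x = 0) := by
  have ho : L.IsOrthogonal A₁ A₂ := hmix
  constructor
  · intro hg
    exact ⟨_, _, _, _, LinearMap.eq_add_projection_comp_comp hcompl g,
      hg.inQCOfSummand hcompl ho, hg.inQCOfSummand hcompl.symm ho.symm,
      hg.inHomToCenter hcompl ho, hg.inHomToCenter hcompl.symm ho.symm⟩
  · rintro ⟨g₁, g₂, h₁, h₂, rfl, hg₁, hg₂, hh₁, hh₂⟩
    exact (((InQCOfSummand.inQC hg₁ hcompl ho).add
      (InQCOfSummand.inQC hg₂ hcompl.symm ho.symm)).add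
      (InHomToCenter.inQC hh₁ hcompl ho)).add (InHomToCenter.inQC hh₂ hcompl.symm ho.symm)

theorem stmt19 (L : ThreeLieAlgebra F A) (h2 : (2 : F) ≠ 0) (h3 : (3 : F) ≠ 0)
    (A₁ A₂ : Submodule F A) (hcompl : IsCompl A₁ A₂)
    (hsub₁ : ∀ x ∈ A₁, ∀ y ∈ A₁, ∀ z ∈ A₁, L.br x y z ∈ A₁)
    (hsub₂ : ∀ x ∈ A₂, ∀ y ∈ A₂, ∀ z ∈ A₂, L.br x y z ∈ A₂)
    (hmix : ∀ x ∈ A₁, ∀ y ∈ A₂, ∀ z : A, L.br x y z = 0)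
    (g : A →ₗ[F] A) :
    InQC L g ↔
      ∃ g₁ g₂ h₁ h₂ : A →ₗ[F] A,
        g = g₁ + g₂ + h₁ + h₂ ∧
        ((∀ x ∈ A₁, g₁ x ∈ A₁) ∧ (∀ x ∈ A₂, g₁ x = 0) ∧
          ∀ x ∈ A₁, ∀ y ∈ A₁, ∀ z ∈ A₁,
            L.br (g₁ x) y z = L.br x (g₁ y) z ∧ L.br x (g₁ y) z = L.br x y (g₁ z)) ∧
        ((∀ x ∈ A₂, g₂ x ∈ A₂) ∧ (∀ x ∈ A₁, g₂ x = 0) ∧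
          ∀ x ∈ A₂, ∀ y ∈ A₂, ∀ z ∈ A₂,
            L.br (g₂ x) y z = L.br x (g₂ y) z ∧ L.br x (g₂ y) z = L.br x y (g₂ z)) ∧
        ((∀ x ∈ A₁, h₁ x ∈ A₂ ∧ ∀ y ∈ A₂, ∀ z ∈ A₂, L.br (h₁ x) y z = 0) ∧
          ∀ x ∈ A₂, h₁ x = 0) ∧
        ((∀ x ∈ A₂, h₂ x ∈ A₁ ∧ ∀ y ∈ A₁, ∀ z ∈ A₁, L.br (h₂ x) y z = 0) ∧
          ∀ x ∈ A₁, h₂ x = 0) :=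
  stmt19_general L A₁ A₂ hcompl hmix g
end
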